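/- arXiv:2509.09169 — 9 statements merged into one kernel-verified Lean document; each statement's English description precedes it below -/
import Mathlib

section
/- Let p be an odd prime with p ≡ 7 (mod 40) or p ≡ 23 (mod 40). Then there are no integers N, M, e with M ≠ 0, e ≠ 0, gcd(N,M) = gcd(N,e) = gcd(M,e) = 1 and gcd(5p, e) = 1 satisfying N² = 5pM⁴ − e⁴. -/
theorem torsor_T1_no_solutions (p : ℕ) (hp : p.Prime) (hodd : Odd p)
    (hcong : p % 40 = 7 ∨ p % 40 = 23) :
    ¬ ∃ N M e : ℤ, M ≠ 0 ∧ e ≠ 0 ∧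
      Int.gcd N M = 1 ∧ Int.gcd N e = 1 ∧ Int.gcd M e = 1 ∧
      Int.gcd (5 * (p : ℤ)) e = 1 ∧
      N ^ 2 = 5 * (p : ℤ) * M ^ 4 - e ^ 4 := by
  rintro ⟨N, M, e, hM, he, h1, h2, h3, h4, heq⟩
  haveI : Fact p.Prime := ⟨hp⟩
  have hp4 : p % 4 = 3 := by omega
  have hpe : ¬ ((p : ℤ) ∣ e) := by
    intro hdvd
    have hd : (p : ℤ) ∣ (Int.gcd (5 * (p : ℤ)) e : ℤ) :=
      Int.dvd_coe_gcd ⟨5, by ring⟩ hdvd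
    rw [h4] at hd
    have := Int.le_of_dvd one_pos hd
    have := hp.two_le
    omega
  have he0 : ((e : ZMod p)) ≠ 0 := by
    rw [Ne, ZMod.intCast_zmod_eq_zero_iff_dvd]
    exact_mod_cast hpe
  have hN : ((N : ZMod p)) ^ 2 = - ((e : ZMod p)) ^ 4 := by
    have h := congrArg (fun z : ℤ => (z : ZMod p)) heq
    push_cast at h
    rw [h]
    simp [ZMod.natCast_self]
  have hsq : IsSquare (-1 : ZMod p) := by
    refine ⟨(N : ZMod p) * (((e : ZMod p)) ^ 2)⁻¹, ?_⟩
    have he2 : ((e : ZMod p)) ^ 2 ≠ 0 := pow_ne_zero 2 he0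
    field_simp
    exact hN.symm
  rw [ZMod.exists_sq_eq_neg_one_iff] at hsq
  exact hsq hp4
end

section
/- Let p be an odd prime with p ≡ 7 (mod 40) or p ≡ 23 (mod 40). Then there are no integers N, M, e with M ≠ 0, e ≠ 0, gcd(N,M) = gcd(N,e) = gcd(M,e) = 1 and gcd(5, e) = 1 satisfying N² = 5M⁴ − pe⁴. -/
lemma zmod5_no_sq2 : ∀ n e : ZMod 5, e ≠ 0 → n ^ 2 ≠ -(2 : ZMod 5) * e ^ 4 := by
  decide

lemma zmod5_no_sq3 : ∀ n e : ZMod 5, e ≠ 0 → n ^ 2 ≠ -(3 : ZMod 5) * e ^ 4 := by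
  decide

theorem torsor_T2_no_solutions (p : ℕ) (hp : p.Prime) (hodd : Odd p)
    (hcong : p % 40 = 7 ∨ p % 40 = 23) :
    ¬ ∃ N M e : ℤ, M ≠ 0 ∧ e ≠ 0 ∧
      Int.gcd N M = 1 ∧ Int.gcd N e = 1 ∧ Int.gcd M e = 1 ∧
      Int.gcd 5 e = 1 ∧
      N ^ 2 = 5 * M ^ 4 - (p : ℤ) * e ^ 4 := by
  rintro ⟨N, M, e, -, -, -, -, -, h5, heq⟩
  have he5 : (e : ZMod 5) ≠ 0 := by
    intro h
    have hdvd : (5 : ℤ) ∣ e := by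
      exact_mod_cast (ZMod.intCast_zmod_eq_zero_iff_dvd e 5).mp h
    have : (5 : ℤ) ∣ (Int.gcd 5 e : ℤ) := Int.dvd_coe_gcd dvd_rfl hdvd
    rw [h5] at this
    norm_num at this
  have key : ((N : ZMod 5)) ^ 2 = -((p : ℕ) : ZMod 5) * (e : ZMod 5) ^ 4 := by
    have := congrArg (Int.cast : ℤ → ZMod 5) heq
    push_cast at this
    rw [this]
    have h0 : (5 : ZMod 5) = 0 := by decide
    rw [h0]; ring
  have hp5 : p % 5 = 2 ∨ p % 5 = 3 := by omega
  have hcast : ((p : ℕ) : ZMod 5) = ((p % 5 : ℕ) : ZMod 5) := (ZMod.natCast_mod p 5).symm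
  rcases hp5 with h | h
  · rw [hcast, h] at key
    exact zmod5_no_sq2 _ _ he5 key
  · rw [hcast, h] at key
    exact zmod5_no_sq3 _ _ he5 key
end

section
/- Let p be an odd prime with p ≡ 7 (mod 40) or p ≡ 23 (mod 40). Then there are no integers N, M, e with M ≠ 0, e ≠ 0, gcd(N,M) = gcd(N,e) = gcd(M,e) = 1 and gcd(5, M) = 1 satisfying N² = pM⁴ − 5e⁴. -/
theorem torsor_T3_no_solutions (p : ℕ) (hp : p.Prime) (hodd : Odd p)
    (hcong : p % 40 = 7 ∨ p % 40 = 23) :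
    ¬ ∃ N M e : ℤ, M ≠ 0 ∧ e ≠ 0 ∧
      Int.gcd N M = 1 ∧ Int.gcd N e = 1 ∧ Int.gcd M e = 1 ∧
      Int.gcd 5 M = 1 ∧
      N ^ 2 = (p : ℤ) * M ^ 4 - 5 * e ^ 4 := by
  rintro ⟨N, M, e, hM, he, h1, h2, h3, h5M, heq⟩
  have hp5 : p % 5 = 2 ∨ p % 5 = 3 := by omega
  -- reduce mod 5
  have hmod : ((N : ZMod 5))^2 = ((p : ℕ) : ZMod 5) * ((M : ZMod 5))^4 := by
    have := congrArg (fun z : ℤ => (z : ZMod 5)) heq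
    push_cast at this
    have h5 : (5 : ZMod 5) = 0 := by decide
    simpa [h5] using this
  have hMne : (M : ZMod 5) ≠ 0 := by
    intro h
    rw [ZMod.intCast_zmod_eq_zero_iff_dvd] at h
    have hd : (5 : ℤ) ∣ (Int.gcd 5 M : ℤ) := Int.dvd_coe_gcd dvd_rfl (by exact_mod_cast h)
    rw [h5M] at hd
    norm_num at hd
  have hpcast : ((p : ℕ) : ZMod 5) = ((p % 5 : ℕ) : ZMod 5) := (ZMod.natCast_mod p 5).symm
  rcases hp5 with h5 | h5 <;> rw [hpcast, h5] at hmod <;>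
    revert hmod <;> revert hMne <;>
    generalize (N : ZMod 5) = n <;> generalize (M : ZMod 5) = m <;>
    revert n m <;> decide
end

section
/- Let p be an odd prime with p ≡ 7 (mod 40) or p ≡ 23 (mod 40). Then there are no integers N, M, e with M ≠ 0, e ≠ 0, gcd(N,M) = gcd(N,e) = gcd(M,e) = 1 and gcd(10p, M) = 1 satisfying N² = 2M⁴ + 10pe⁴. -/
theorem torsor_T1'_no_solutions (p : ℕ) (hp : p.Prime) (hodd : Odd p)
    (hcong : p % 40 = 7 ∨ p % 40 = 23) :
    ¬ ∃ N M e : ℤ, M ≠ 0 ∧ e ≠ 0 ∧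
      Int.gcd N M = 1 ∧ Int.gcd N e = 1 ∧ Int.gcd M e = 1 ∧
      Int.gcd (10 * (p : ℤ)) M = 1 ∧
      N ^ 2 = 2 * M ^ 4 + 10 * (p : ℤ) * e ^ 4 := by
  rintro ⟨N, M, e, hM, he, h1, h2, h3, h4, heq⟩
  have h5M : ¬ (5 : ℤ) ∣ M := by
    intro h
    have hd : (5 : ℤ) ∣ (Int.gcd (10 * (p : ℤ)) M : ℤ) :=
      Int.dvd_coe_gcd ⟨2 * (p : ℤ), by ring⟩ h
    rw [h4] at hd
    norm_num at hd
  have hM5 : (M : ZMod 5) ≠ 0 := by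
    rwa [Ne, ZMod.intCast_zmod_eq_zero_iff_dvd]
  have heq5 : ((N : ZMod 5)) ^ 2 = 2 * (M : ZMod 5) ^ 4 := by
    have := congrArg (fun x : ℤ => (x : ZMod 5)) heq
    push_cast at this
    rw [this]
    have : ((10 : ZMod 5)) = 0 := by decide
    rw [this]
    ring
  revert hM5 heq5
  generalize (N : ZMod 5) = a
  generalize (M : ZMod 5) = b
  revert a b
  decide
end

section
/- Let p be an odd prime with p ≡ 7 (mod 40) or p ≡ 23 (mod 40). Then there are no integers N, M, e with M ≠ 0, e ≠ 0, gcd(N,M) = gcd(N,e) = gcd(M,e) = 1 and e odd satisfying N² = 4M⁴ + 5pe⁴. -/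
lemma zmod8_aux : ∀ n m k : ZMod 8, n ^ 2 ≠ 4 * m ^ 4 + 5 * 7 * (2 * k + 1) ^ 4 := by
  decide

theorem torsor_T2'_no_solutions (p : ℕ) (hp : p.Prime) (hodd : Odd p)
    (hcong : p % 40 = 7 ∨ p % 40 = 23) :
    ¬ ∃ N M e : ℤ, M ≠ 0 ∧ e ≠ 0 ∧
      Int.gcd N M = 1 ∧ Int.gcd N e = 1 ∧ Int.gcd M e = 1 ∧
      Odd e ∧
      N ^ 2 = 4 * M ^ 4 + 5 * (p : ℤ) * e ^ 4 := by
  rintro ⟨N, M, e, -, -, -, -, -, ⟨k, hk⟩, heq⟩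
  have h8 : p % 8 = 7 := by omega
  have hcast := congrArg (fun z : ℤ => (z : ZMod 8)) heq
  subst hk
  push_cast at hcast
  have hp8 : ((p : ℕ) : ZMod 8) = 7 := by
    rw [← ZMod.natCast_mod p 8, h8]; rfl
  rw [hp8] at hcast
  exact zmod8_aux (N : ZMod 8) (M : ZMod 8) (k : ZMod 8) hcast
end

section
/- Let p be an odd prime with p ≡ 7 (mod 40) or p ≡ 23 (mod 40). Then there are no integers N, M, e with M ≠ 0, e ≠ 0 and gcd(N,M) = gcd(N,e) = gcd(M,e) = 1 satisfying N² = 5M⁴ + 4pe⁴. -/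
theorem torsor_T3'_no_solutions (p : ℕ) (hp : p.Prime) (hodd : Odd p)
    (hcong : p % 40 = 7 ∨ p % 40 = 23) :
    ¬ ∃ N M e : ℤ, M ≠ 0 ∧ e ≠ 0 ∧
      Int.gcd N M = 1 ∧ Int.gcd N e = 1 ∧ Int.gcd M e = 1 ∧
      N ^ 2 = 5 * M ^ 4 + 4 * (p : ℤ) * e ^ 4 := by
  rintro ⟨N, M, e, hM, he, hNM, hNe, hMe, heq⟩
  have hp5 : p % 5 = 2 ∨ p % 5 = 3 := by omega
  have hq : ((p : ℤ) : ZMod 5) = 2 ∨ ((p : ℤ) : ZMod 5) = 3 := by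
    have : ((p : ℤ) : ZMod 5) = ((p % 5 : ℕ) : ZMod 5) := by
      push_cast
      rw [ZMod.natCast_mod]
    rcases hp5 with h | h <;> [left; right] <;> rw [this, h] <;> rfl
  have hmod : ((N : ZMod 5))^2 = 5 * (M : ZMod 5)^4 + 4 * ((p:ℤ) : ZMod 5) * (e : ZMod 5)^4 := by
    have := congrArg (fun z : ℤ => (z : ZMod 5)) heq
    push_cast at this
    exact this
  have prime5 : Prime (5 : ℤ) := by norm_num
  have h5e : (5 : ℤ) ∣ e := by
    by_contra h5e
    have hb : (e : ZMod 5) ≠ 0 := by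
      rw [Ne, ZMod.intCast_zmod_eq_zero_iff_dvd]
      exact h5e
    have key : ∀ a b c q : ZMod 5, q = 2 ∨ q = 3 → b ≠ 0 →
        a^2 ≠ 5 * c^4 + 4 * q * b^4 := by decide
    exact key _ _ _ _ hq hb hmod
  have h5N : (5 : ℤ) ∣ N := by
    have : (5 : ℤ) ∣ N ^ 2 := by
      rw [heq]
      obtain ⟨f, rfl⟩ := h5e
      ring_nf
      exact ⟨M ^ 4 + 500 * (p : ℤ) * f ^ 4, by ring⟩
    exact prime5.dvd_of_dvd_pow this
  have h5M : (5 : ℤ) ∣ M := by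
    obtain ⟨f, rfl⟩ := h5e
    obtain ⟨n, rfl⟩ := h5N
    have : (5 : ℤ) ∣ M ^ 4 := ⟨n ^ 2 - 100 * (p : ℤ) * f ^ 4, by linarith [heq]⟩
    exact prime5.dvd_of_dvd_pow this
  have : (5 : ℤ) ∣ (Int.gcd M e : ℤ) := Int.dvd_coe_gcd h5M h5e
  rw [hMe] at this
  norm_num at this
end

section
/- Let p be an odd prime with p ≡ 7 (mod 40) or p ≡ 23 (mod 40). Then there are no integers N, M, e with M ≠ 0, e ≠ 0 and gcd(N,M) = gcd(N,e) = gcd(M,e) = 1 satisfying N² = 20M⁴ + pe⁴. -/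
theorem torsor_T4'_no_solutions (p : ℕ) (hp : p.Prime) (hodd : Odd p)
    (hcong : p % 40 = 7 ∨ p % 40 = 23) :
    ¬ ∃ N M e : ℤ, M ≠ 0 ∧ e ≠ 0 ∧
      Int.gcd N M = 1 ∧ Int.gcd N e = 1 ∧ Int.gcd M e = 1 ∧
      N ^ 2 = 20 * M ^ 4 + (p : ℤ) * e ^ 4 := by
  rintro ⟨N, M, e, hM, he, h1, h2, h3, heq⟩
  have hp5 : (p : ZMod 5) = 2 ∨ (p : ZMod 5) = 3 := by
    have h : p % 5 = 2 ∨ p % 5 = 3 := by omega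
    have hcast : (p : ZMod 5) = ((p % 5 : ℕ) : ZMod 5) := (ZMod.natCast_mod p 5).symm
    rcases h with h | h
    · left; rw [hcast, h]; decide
    · right; rw [hcast, h]; decide
  have hmod : ((N : ZMod 5)) ^ 2 = (p : ZMod 5) * ((e : ZMod 5)) ^ 4 := by
    have h := congrArg (fun z : ℤ => (z : ZMod 5)) heq
    push_cast at h
    have h20 : (20 : ZMod 5) = 0 := by decide
    rw [h20, zero_mul, zero_add] at h
    exact h
  by_cases he5 : (e : ZMod 5) = 0
  · have hN2 : ((N : ZMod 5)) ^ 2 = 0 := by rw [hmod, he5]; ring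
    have hN : (N : ZMod 5) = 0 := by
      have : ∀ x : ZMod 5, x ^ 2 = 0 → x = 0 := by decide
      exact this _ hN2
    have hdN : (5 : ℤ) ∣ N := (ZMod.intCast_zmod_eq_zero_iff_dvd N 5).mp hN
    have hde : (5 : ℤ) ∣ e := (ZMod.intCast_zmod_eq_zero_iff_dvd e 5).mp he5
    have hd : (5 : ℤ) ∣ (Int.gcd N e : ℤ) := Int.dvd_coe_gcd hdN hde
    rw [h2] at hd
    norm_num at hd
  · have he4 : ((e : ZMod 5)) ^ 4 = 1 := by
      have : ∀ x : ZMod 5, x ≠ 0 → x ^ 4 = 1 := by decide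
      exact this _ he5
    rw [he4, mul_one] at hmod
    have hnosq : ∀ x : ZMod 5, x ^ 2 ≠ 2 ∧ x ^ 2 ≠ 3 := by decide
    rcases hp5 with h | h <;> rw [h] at hmod
    · exact (hnosq _).1 hmod
    · exact (hnosq _).2 hmod
end

section
/- Let p be an odd prime with p ≡ 7 (mod 40) or p ≡ 23 (mod 40). Then there are no integers N, M, e with M ≠ 0, e ≠ 0 and gcd(N,M) = gcd(N,e) = gcd(M,e) = 1 satisfying N² = 2pM⁴ + 10e⁴. -/
lemma zmod16_sq : ∀ n : ZMod 16, n ^ 2 ≠ 8 ∧ n ^ 2 ≠ 10 ∧ n ^ 2 ≠ 14 := by decide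

lemma zmod16_pow4 : ∀ m : ZMod 16, m ^ 4 = 0 ∨ m ^ 4 = 1 := by decide

lemma zmod16_odd_pow4 : ∀ m : ZMod 16, (∃ a, m = 2 * a + 1) → m ^ 4 = 1 := by decide

theorem torsor_T5'_no_solutions (p : ℕ) (hp : p.Prime) (hodd : Odd p)
    (hcong : p % 40 = 7 ∨ p % 40 = 23) :
    ¬ ∃ N M e : ℤ, M ≠ 0 ∧ e ≠ 0 ∧
      Int.gcd N M = 1 ∧ Int.gcd N e = 1 ∧ Int.gcd M e = 1 ∧
      N ^ 2 = 2 * (p : ℤ) * M ^ 4 + 10 * e ^ 4 := by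
  rintro ⟨N, M, e, hM, he, _, _, hMe, heq⟩
  -- M and e are not both even
  have hpar : Odd M ∨ Odd e := by
    by_contra h
    push_neg at h
    rw [Int.not_odd_iff_even, Int.not_odd_iff_even] at h
    obtain ⟨h1, h2⟩ := h
    have : (2 : ℤ) ∣ (Int.gcd M e : ℤ) :=
      Int.dvd_coe_gcd h1.two_dvd h2.two_dvd
    rw [hMe] at this
    norm_num at this
  -- p mod 16 is 7 or 15
  have hp16 : p % 16 = 7 ∨ p % 16 = 15 := by omega
  have hq : (p : ZMod 16) = 7 ∨ (p : ZMod 16) = 15 := by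
    have h16 : ((p % 16 : ℕ) : ZMod 16) = (p : ZMod 16) := ZMod.natCast_mod p 16 ▸ rfl
    rcases hp16 with h | h <;> [left; right] <;>
      rw [← h16, h] <;> rfl
  have h2q : 2 * (p : ZMod 16) = 14 := by
    rcases hq with h | h <;> rw [h] <;> decide
  -- cast the equation to ZMod 16
  have hcast : ((N : ZMod 16)) ^ 2 =
      2 * (p : ZMod 16) * (M : ZMod 16) ^ 4 + 10 * (e : ZMod 16) ^ 4 := by
    have := congrArg (fun z : ℤ => (z : ZMod 16)) heq
    push_cast at this
    exact this
  rw [h2q] at hcast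
  have hpar' : (M : ZMod 16) ^ 4 = 1 ∨ (e : ZMod 16) ^ 4 = 1 := by
    rcases hpar with ⟨k, hk⟩ | ⟨k, hk⟩
    · left
      exact zmod16_odd_pow4 _ ⟨(k : ZMod 16), by rw [hk]; push_cast; ring⟩
    · right
      exact zmod16_odd_pow4 _ ⟨(k : ZMod 16), by rw [hk]; push_cast; ring⟩
  obtain ⟨s1, s2, s3⟩ := zmod16_sq (N : ZMod 16)
  rcases hpar' with h1 | h1
  · rw [h1] at hcast
    rcases zmod16_pow4 (e : ZMod 16) with h3 | h3 <;> rw [h3] at hcast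
    · rw [show (14 * 1 + 10 * 0 : ZMod 16) = 14 from by decide] at hcast
      exact s3 hcast
    · rw [show (14 * 1 + 10 * 1 : ZMod 16) = 8 from by decide] at hcast
      exact s1 hcast
  · rw [h1] at hcast
    rcases zmod16_pow4 (M : ZMod 16) with h2 | h2 <;> rw [h2] at hcast
    · rw [show (14 * 0 + 10 * 1 : ZMod 16) = 10 from by decide] at hcast
      exact s2 hcast
    · rw [show (14 * 1 + 10 * 1 : ZMod 16) = 8 from by decide] at hcast
      exact s1 hcast
end

section
/- Let p be an odd prime. Suppose either p = 40k₃ + 11 for some integer k₃ such that 160k₃ + 49 is a perfect square, or p = 40k₄ + 19 for some integer k₄ such that 160k₄ + 81 is a perfect square. Then the elliptic curve E_p : y² = x³ − 5px has Mordell–Weil rank at least one over ℚ; equivalently, E_p(ℚ) contains a point of infinite order. -/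
/-- The elliptic curve `Eₚ : y² = x³ - 5px` as a Weierstrass curve over `ℚ`. -/
def Ep (p : ℕ) : WeierstrassCurve.Affine ℚ :=
  { a₁ := 0, a₂ := 0, a₃ := 0, a₄ := -5 * p, a₆ := 0 }

open WeierstrassCurve.Affine in
lemma Ep_step (p : ℕ) (hp2 : ¬ 2 ∣ p) {x y : ℚ} (heq : (Ep p).Equation x y)
    (hx : 1 < padicNorm 2 x) :
    y ≠ (Ep p).negY x y ∧
    padicNorm 2 ((Ep p).addX x x ((Ep p).slope x x y y)) = 4 * padicNorm 2 x := by
  have heq' : y ^ 2 = x ^ 3 - 5 * p * x := by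
    have := (equation_iff (W := Ep p) x y).mp heq
    simp only [Ep] at this
    linarith
  set q := padicNorm 2 x with hqdef
  have hx0 : x ≠ 0 := by
    intro h
    rw [hqdef, h, padicNorm.zero] at hx
    norm_num at hx
  have hq0 : 0 < q := lt_trans one_pos hx
  have hqx : padicNorm 2 (x ^ 2) = q ^ 2 := by
    rw [sq, padicNorm.mul, ← hqdef, sq]
  have hqx3 : padicNorm 2 (x ^ 3) = q ^ 3 := by
    rw [pow_succ, padicNorm.mul, hqx, ← hqdef]
    ring
  have h5p : padicNorm 2 ((5 * p : ℚ)) = 1 := by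
    have : ((5 * p : ℕ) : ℚ) = 5 * p := by push_cast; ring
    rw [← this, padicNorm.nat_eq_one_iff]
    omega
  have hy2 : padicNorm 2 (y ^ 2) = q ^ 3 := by
    rw [heq', sub_eq_add_neg, padicNorm.add_eq_max_of_ne, padicNorm.neg,
        padicNorm.mul, h5p, hqx3, one_mul, ← hqdef]
    · exact max_eq_left (by nlinarith)
    · rw [padicNorm.neg, padicNorm.mul, h5p, hqx3, one_mul, ← hqdef]
      intro hcon; nlinarith
  have hy0 : y ≠ 0 := by
    intro h
    rw [h] at hy2; simp [padicNorm.zero] at hy2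
    nlinarith
  have hneg : y ≠ (Ep p).negY x y := by
    simp only [negY, Ep]
    intro hcon
    apply hy0
    linarith [hcon]
  refine ⟨hneg, ?_⟩
  have hslope : (Ep p).slope x x y y = (3 * x ^ 2 - 5 * p) / (2 * y) := by
    rw [slope_of_Y_ne rfl hneg]
    simp only [negY, Ep]
    ring_nf
  have hkey : (Ep p).addX x x ((Ep p).slope x x y y) = (x ^ 2 + 5 * p) ^ 2 / (4 * y ^ 2) := by
    rw [hslope]
    simp only [addX, Ep]
    field_simp
    ring_nf
    linear_combination (-32 * x) * heq'
  rw [hkey, padicNorm.div, padicNorm.mul, hy2]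
  have hsum : padicNorm 2 (x ^ 2 + 5 * p) = q ^ 2 := by
    rw [padicNorm.add_eq_max_of_ne]
    · rw [hqx, h5p]; exact max_eq_left (by nlinarith)
    · rw [hqx, h5p]; intro hcon; nlinarith
  have h4 : padicNorm 2 (4 : ℚ) = 1 / 4 := by
    have : (4 : ℚ) = (2 : ℚ) * 2 := by norm_num
    rw [this, padicNorm.mul,
      show padicNorm 2 (2 : ℚ) = 2⁻¹ by
        simpa using padicNorm.padicNorm_p (p := 2) (by norm_num)]
    norm_num
  rw [sq ((x ^ 2 + 5 * (p:ℚ))), padicNorm.mul, hsum, h4]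
  field_simp

theorem Ep_rank_ge_one (p : ℕ) (hp : p.Prime) (hodd : Odd p)
    (h : (∃ k₃ : ℤ, (p : ℤ) = 40 * k₃ + 11 ∧ ∃ s : ℤ, 160 * k₃ + 49 = s ^ 2) ∨
         (∃ k₄ : ℤ, (p : ℤ) = 40 * k₄ + 19 ∧ ∃ s : ℤ, 160 * k₄ + 81 = s ^ 2)) :
    ∃ P : (Ep p).Point, ¬ IsOfFinAddOrder P := by
  classical
  obtain ⟨s, hs⟩ : ∃ s : ℤ, 4 * (p : ℤ) + 5 = s ^ 2 := by
    rcases h with ⟨k, hk, s, hs⟩ | ⟨k, hk, s, hs⟩ <;> exact ⟨s, by rw [hk]; linarith⟩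
  have hp2 : ¬ 2 ∣ p := by
    have := Nat.odd_iff.mp hodd; omega
  have hp3 : 2 ≤ p := hp.two_le
  have hcast : ((s : ℚ)) ^ 2 = 4 * p + 5 := by
    exact_mod_cast congrArg (fun z : ℤ => (z : ℚ)) hs.symm
  set xs : ℚ := (s : ℚ) ^ 2 / 4 with hxsdef
  set ys : ℚ := (s : ℚ) * ((s : ℚ) ^ 2 - 10) / 8 with hysdef
  have heq0 : (Ep p).Equation xs ys := by
    rw [WeierstrassCurve.Affine.equation_iff]
    simp only [Ep, hxsdef, hysdef]
    have hp' : (p : ℚ) = ((s : ℚ) ^ 2 - 5) / 4 := by linarith [hcast]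
    rw [hp']
    field_simp
    ring
  have hys0 : ys ≠ 0 := by
    have hs2 : (s : ℚ) ^ 2 = 4 * p + 5 := hcast
    have h1 : (s : ℚ) ≠ 0 := by
      intro hcon; rw [hcon] at hs2; norm_num at hs2; nlinarith [hp3]
    have h2 : (s : ℚ) ^ 2 - 10 ≠ 0 := by
      rw [hs2]; push_cast; nlinarith [(show (2:ℚ) ≤ p by exact_mod_cast hp3)]
    rw [hysdef]
    positivity
  have hns : (Ep p).Nonsingular xs ys := by
    rw [WeierstrassCurve.Affine.nonsingular_iff]
    refine ⟨heq0, Or.inr ?_⟩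
    simp only [Ep]
    intro hcon
    apply hys0
    linarith [hcon]
  have hxs : padicNorm 2 xs = 4 := by
    have hsodd : ¬ (2 : ℤ) ∣ s := by
      rintro ⟨c, rfl⟩
      have h4 : (4 : ℤ) ∣ 5 := ⟨c * c - p, by linarith [hs]⟩
      norm_num at h4
    have hnum : padicNorm 2 ((s : ℚ) ^ 2) = 1 := by
      rw [sq, padicNorm.mul,
        show padicNorm 2 (s : ℚ) = 1 from (padicNorm.int_eq_one_iff (p := 2) s).mpr hsodd]
      norm_num
    have h4 : padicNorm 2 (4 : ℚ) = 1 / 4 := by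
      have : (4 : ℚ) = (2 : ℚ) * 2 := by norm_num
      rw [this, padicNorm.mul,
        show padicNorm 2 (2 : ℚ) = 2⁻¹ by
          simpa using padicNorm.padicNorm_p (p := 2) (by norm_num)]
      norm_num
    rw [hxsdef, padicNorm.div, hnum, h4]
    norm_num
  set P : (Ep p).Point := WeierstrassCurve.Affine.Point.some _ _ hns with hPdef
  have claim : ∀ n : ℕ, ∃ (x y : ℚ) (hn : (Ep p).Nonsingular x y),
      (2 ^ n) • P = WeierstrassCurve.Affine.Point.some _ _ hn ∧ padicNorm 2 x = 4 ^ (n + 1) := by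
    intro n
    induction n with
    | zero => exact ⟨xs, ys, hns, by rw [pow_zero, one_smul], by rw [hxs, pow_one]⟩
    | succ n ih =>
      obtain ⟨x, y, hn, hP, hv⟩ := ih
      have hx1 : 1 < padicNorm 2 x := by
        rw [hv]
        exact one_lt_pow₀ (by norm_num) (Nat.succ_ne_zero n)
      have heqn : (Ep p).Equation x y :=
        ((WeierstrassCurve.Affine.nonsingular_iff' (W := Ep p) x y).mp hn).1
      obtain ⟨hne, hval⟩ := Ep_step p hp2 heqn hx1
      refine ⟨_, _, WeierstrassCurve.Affine.nonsingular_add hn hn fun hxy => hne hxy.2, ?_, ?_⟩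
      · rw [pow_succ, mul_two, add_smul, hP,
            WeierstrassCurve.Affine.Point.add_self_of_Y_ne hne]
      · rw [hval, hv]
        ring
  refine ⟨P, fun hfin => ?_⟩
  have hd : 0 < addOrderOf P := hfin.addOrderOf_pos
  haveI : NeZero (addOrderOf P) := ⟨hd.ne'⟩
  obtain ⟨a, b, hab, he⟩ :=
    Finite.exists_ne_map_eq_of_infinite (fun n : ℕ => ((2 ^ n : ℕ) : ZMod (addOrderOf P)))
  have hmod : 2 ^ a ≡ 2 ^ b [MOD addOrderOf P] :=
    (ZMod.natCast_eq_natCast_iff _ _ _).mp he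
  have hsm : (2 ^ a) • P = (2 ^ b) • P := nsmul_eq_nsmul_iff_modEq.mpr hmod
  obtain ⟨xa, ya, ha, hPa, hva⟩ := claim a
  obtain ⟨xb, yb, hb, hPb, hvb⟩ := claim b
  rw [hPa, hPb] at hsm
  simp only [WeierstrassCurve.Affine.Point.some.injEq] at hsm
  have hxx : xa = xb := hsm.1
  have h44 : (4 : ℚ) ^ (a + 1) = (4 : ℚ) ^ (b + 1) := by rw [← hva, ← hvb, hxx]
  have h44' : (4 : ℕ) ^ (a + 1) = (4 : ℕ) ^ (b + 1) := by exact_mod_cast h44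
  have := Nat.pow_right_injective (by norm_num : 2 ≤ 4) h44'
  omega
end
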